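/- arXiv:1306.0930 — 6 statements merged into one kernel-verified Lean document; each statement's English description precedes it below -/
import Mathlib

section
/- Let m > 2, L > 0, δ > 0, and suppose ν > 0 and ρ ∈ C([0,L]) is nonnegative and nonincreasing with ρ(0) = 1 and ρ(L) = 0, satisfying ν (ρ(x) + δ)^{m−1} = 𝒢_L[ρ](x) + ν δ^{m−1} for all x ∈ [0,L]. Then ν ≤ ∫₀^L |G(y) + G(−y) − G(L+y) − G(L−y)| dy. -/
/-!
Evaluate the equation at `x = 0`, where `ρ(0) = 1`: superadditivity of `t ↦ t^(m-1)`
(as `m - 1 ≥ 1`) gives `(1 + δ)^(m-1) ≥ 1 + δ^(m-1)`, so `ν ≤ 𝒢_L[ρ](0)`. Since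
`0 ≤ ρ ≤ 1` on `[0, L]`, the integral `𝒢_L[ρ](0)` is at most the integral of the
absolute value of its kernel.
-/

open Set MeasureTheory Filter

/-- The operator `ℋ_L[u](x) = ∫₀^L [G(x−y) − G(x+y)] u(y) dy`. -/
noncomputable def Hop (G : ℝ → ℝ) (L : ℝ) (u : ℝ → ℝ) (x : ℝ) : ℝ :=
  ∫ y in (0:ℝ)..L, (G (x - y) - G (x + y)) * u y

/-- The operator `𝒢_L[ρ](x) = ∫₀^L [G(x−y) + G(x+y) − G(L−y) − G(L+y)] ρ(y) dy`. -/
noncomputable def Gop (G : ℝ → ℝ) (L : ℝ) (ρ : ℝ → ℝ) (x : ℝ) : ℝ :=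
  ∫ y in (0:ℝ)..L, (G (x - y) + G (x + y) - G (L - y) - G (L + y)) * ρ y

/-- The standing assumptions on the interaction kernel `G`: nonnegative with
`supp(G) = ℝ` (hence strictly positive), in `W^{1,1}(ℝ)` (it is integrable, has an
integrable derivative away from the origin, and — by Sobolev embedding — is
continuous), `C²` away from the origin, even (`G(x) = g(|x|)`), strictly decreasing
in `|x|` (`g'(r) < 0`), and decaying to `0` at infinity. -/
def KernelAssumptions (G : ℝ → ℝ) : Prop :=
  Continuous G ∧
  (∀ x, 0 < G x) ∧
  MeasureTheory.Integrable G ∧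
  (∃ G' : ℝ → ℝ, MeasureTheory.Integrable G' ∧ ∀ x : ℝ, x ≠ 0 → HasDerivAt G (G' x) x) ∧
  ContDiffOn ℝ 2 G {(0:ℝ)}ᶜ ∧
  (∀ x, G (-x) = G x) ∧
  StrictAntiOn G (Set.Ici 0) ∧
  Filter.Tendsto G Filter.atTop (nhds 0)

lemma le_of_mul_one_add_rpow_eq {ν c δ p : ℝ} (hν : 0 ≤ ν) (hδ : 0 ≤ δ) (hp : 1 ≤ p)
    (h : ν * (1 + δ) ^ p = c + ν * δ ^ p) : ν ≤ c := by
  have hsuper : 1 + δ ^ p ≤ (1 + δ) ^ p := by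
    simpa using Real.add_rpow_le_rpow_add zero_le_one hδ hp
  nlinarith [mul_le_mul_of_nonneg_left hsuper hν]

/-- No integrability of `f * ρ` is needed: otherwise its integral is `0`. -/
lemma intervalIntegral.integral_mul_le_integral_abs {f ρ : ℝ → ℝ} {a b : ℝ} (hab : a ≤ b)
    (hf : IntervalIntegrable f volume a b) (hρ : ∀ y ∈ Icc a b, 0 ≤ ρ y ∧ ρ y ≤ 1) :
    ∫ y in a..b, f y * ρ y ≤ ∫ y in a..b, |f y| := by
  by_cases hfρ : IntervalIntegrable (fun y => f y * ρ y) volume a b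
  · refine intervalIntegral.integral_mono_on hab hfρ hf.abs fun y hy => ?_
    obtain ⟨hρ0, hρ1⟩ := hρ y hy
    calc f y * ρ y ≤ |f y| * ρ y := mul_le_mul_of_nonneg_right (le_abs_self _) hρ0
      _ ≤ |f y| := mul_le_of_le_one_right (abs_nonneg _) hρ1
  · rw [intervalIntegral.integral_undef hfρ]
    exact intervalIntegral.integral_nonneg hab fun y _ => abs_nonneg _

lemma Gop_zero (G : ℝ → ℝ) (L : ℝ) (ρ : ℝ → ℝ) :
    Gop G L ρ 0 = ∫ y in (0:ℝ)..L, (G y + G (-y) - G (L + y) - G (L - y)) * ρ y := by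
  simp only [Gop, zero_sub, zero_add]
  congr 1
  ext y
  ring

theorem eigenvalue_upper_bound_general
    (G : ℝ → ℝ) (hG : KernelAssumptions G)
    (L m δ ν : ℝ) (hL : 0 < L) (hm : 2 < m) (hδ : 0 < δ) (hν : 0 < ν)
    (ρ : ℝ → ℝ)
    (hρnn : ∀ x ∈ Icc (0:ℝ) L, 0 ≤ ρ x)
    (hρmono : AntitoneOn ρ (Icc 0 L))
    (hρ0 : ρ 0 = 1)
    (heq : ∀ x ∈ Icc (0:ℝ) L,
      ν * (ρ x + δ) ^ (m - 1) = Gop G L ρ x + ν * δ ^ (m - 1)) :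
    ν ≤ ∫ y in (0:ℝ)..L, |G y + G (-y) - G (L + y) - G (L - y)| := by
  have h0mem : (0:ℝ) ∈ Icc 0 L := left_mem_Icc.mpr hL.le
  have hν_le : ν ≤ Gop G L ρ 0 := by
    have h0 := heq 0 h0mem
    rw [hρ0] at h0
    exact le_of_mul_one_add_rpow_eq hν.le hδ.le (by linarith) h0
  have hGc : Continuous G := hG.1
  have hkernel : Continuous fun y => G y + G (-y) - G (L + y) - G (L - y) := by fun_prop
  have hρ_unit : ∀ y ∈ Icc (0:ℝ) L, 0 ≤ ρ y ∧ ρ y ≤ 1 := fun y hy =>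
    ⟨hρnn y hy, hρ0 ▸ hρmono h0mem hy hy.1⟩
  calc ν ≤ Gop G L ρ 0 := hν_le
    _ = _ := Gop_zero G L ρ
    _ ≤ _ := intervalIntegral.integral_mul_le_integral_abs hL.le
        (hkernel.intervalIntegrable 0 L) hρ_unit

/-- Uniform upper bound on the eigenvalue `ν` of the regularized integrated problem:
if `ν (ρ(x)+δ)^{m−1} = 𝒢_L[ρ](x) + ν δ^{m−1}` on `[0,L]` for a nonnegative,
nonincreasing continuous `ρ` with `ρ(0) = 1`, `ρ(L) = 0`, then
`ν ≤ ∫₀^L |G(y) + G(−y) − G(L+y) − G(L−y)| dy`. -/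
theorem eigenvalue_upper_bound
    (G : ℝ → ℝ) (hG : KernelAssumptions G)
    (L m δ ν : ℝ) (hL : 0 < L) (hm : 2 < m) (hδ : 0 < δ) (hν : 0 < ν)
    (ρ : ℝ → ℝ) (hρc : ContinuousOn ρ (Icc 0 L))
    (hρnn : ∀ x ∈ Icc (0:ℝ) L, 0 ≤ ρ x)
    (hρmono : AntitoneOn ρ (Icc 0 L))
    (hρ0 : ρ 0 = 1) (hρL : ρ L = 0)
    (heq : ∀ x ∈ Icc (0:ℝ) L,
      ν * (ρ x + δ) ^ (m - 1) = Gop G L ρ x + ν * δ ^ (m - 1)) :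
    ν ≤ ∫ y in (0:ℝ)..L, |G y + G (-y) - G (L + y) - G (L - y)| :=
  eigenvalue_upper_bound_general G hG L m δ ν hL hm hδ hν ρ hρnn hρmono hρ0 heq
end

section
/- Let m > 2, L > 0 and ν₀ > 0, and suppose G is Lipschitz continuous on ℝ with Lipschitz constant K_G. Then there is a constant C = 2 K_G L / ν₀, independent of δ, such that: whenever δ > 0, ν ≥ ν₀, and ρ ∈ C([0,L]) is nonnegative with 0 ≤ ρ ≤ 1 and satisfies ν (ρ(x) + δ)^{m−1} = 𝒢_L[ρ](x) + ν δ^{m−1} for all x ∈ [0,L], one has |ρ(x) − ρ(y)|^{m−1} ≤ |(ρ(x)+δ)^{m−1} − (ρ(y)+δ)^{m−1}| ≤ C |x − y| for all x, y ∈ [0,L]; in particular ρ is uniformly Hölder continuous with exponent 1/(m−1), uniformly in δ. -/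
open Set MeasureTheory

/-- auxiliary: for `p ≥ 1`, `(a-b)^p ≤ (a+δ)^p - (b+δ)^p` when `0 ≤ b ≤ a`, `0 ≤ δ`. -/
lemma aux_rpow_sub (p a b δ : ℝ) (hp : 1 ≤ p) (hb : 0 ≤ b) (hδ : 0 ≤ δ)
    (hba : b ≤ a) : (a - b) ^ p ≤ (a + δ) ^ p - (b + δ) ^ p := by
  have hab : (0:ℝ) ≤ a - b := by linarith
  have hbd : (0:ℝ) ≤ b + δ := by linarith
  have h := NNReal.coe_le_coe.2
    (NNReal.add_rpow_le_rpow_add ((a - b).toNNReal) ((b + δ).toNNReal) hp)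
  rw [← Real.toNNReal_add hab hbd] at h
  simp only [NNReal.coe_add, NNReal.coe_rpow, Real.coe_toNNReal _ hab,
    Real.coe_toNNReal _ hbd, Real.coe_toNNReal _ (by linarith : (0:ℝ) ≤ a - b + (b + δ))] at h
  have hsum : a - b + (b + δ) = a + δ := by ring
  rw [hsum] at h
  linarith

/-- Uniform Hölder estimate for solutions of the regularized integrated problem:
with `C = 2 K_G L / ν₀` independent of `δ`, any solution `ρ` of
`ν (ρ+δ)^{m−1} = 𝒢_L[ρ] + ν δ^{m−1}` with `ν ≥ ν₀` satisfies
`|ρ(x) − ρ(y)|^{m−1} ≤ |(ρ(x)+δ)^{m−1} − (ρ(y)+δ)^{m−1}| ≤ C |x−y|`, hence `ρ` is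
Hölder continuous with exponent `1/(m−1)`, uniformly in `δ`. -/
theorem uniform_hoelder_estimate
    (G : ℝ → ℝ) (K_G : ℝ) (hKG : 0 ≤ K_G)
    (hGnn : ∀ x, 0 ≤ G x) (hGeven : ∀ x, G (-x) = G x)
    (hGbdd : ∃ M : ℝ, ∀ x, |G x| ≤ M)
    (hGlip : ∀ a b : ℝ, |G a - G b| ≤ K_G * |a - b|)
    (L m ν₀ : ℝ) (hL : 0 < L) (hm : 2 < m) (hν₀ : 0 < ν₀) :
    ∀ δ : ℝ, 0 < δ → ∀ ν : ℝ, ν₀ ≤ ν →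
    ∀ ρ : ℝ → ℝ, ContinuousOn ρ (Icc 0 L) →
      (∀ x ∈ Icc (0:ℝ) L, 0 ≤ ρ x ∧ ρ x ≤ 1) →
      (∀ x ∈ Icc (0:ℝ) L,
        ν * (ρ x + δ) ^ (m - 1) = Gop G L ρ x + ν * δ ^ (m - 1)) →
      ∀ x ∈ Icc (0:ℝ) L, ∀ y ∈ Icc (0:ℝ) L,
        |ρ x - ρ y| ^ (m - 1) ≤ |(ρ x + δ) ^ (m - 1) - (ρ y + δ) ^ (m - 1)| ∧
        |(ρ x + δ) ^ (m - 1) - (ρ y + δ) ^ (m - 1)| ≤ (2 * K_G * L / ν₀) * |x - y| ∧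
        |ρ x - ρ y| ≤ ((2 * K_G * L / ν₀) * |x - y|) ^ (1 / (m - 1)) := by
  intro δ hδ ν hν ρ hρc hρb heq x hx y hy
  have hν' : 0 < ν := lt_of_lt_of_le hν₀ hν
  set p := m - 1 with hp_def
  have hp : 1 ≤ p := by simp [hp_def]; linarith
  have hp0 : 0 < p := by linarith
  -- continuity of G
  have hGc : Continuous G := by
    have : LipschitzWith (Real.toNNReal K_G) G := by
      apply LipschitzWith.of_dist_le_mul
      intro a b
      simpa [Real.dist_eq, Real.coe_toNNReal _ hKG] using hGlip a b
    exact this.continuous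
  have huIcc : Set.uIcc (0:ℝ) L = Icc 0 L := uIcc_of_le hL.le
  -- integrability
  have hint : ∀ z : ℝ, IntervalIntegrable
      (fun t => (G (z - t) + G (z + t) - G (L - t) - G (L + t)) * ρ t)
      volume 0 L := by
    intro z
    apply ContinuousOn.intervalIntegrable
    rw [huIcc]
    exact (((((hGc.comp (continuous_const.sub continuous_id)).continuousOn.add
      (hGc.comp (continuous_const.add continuous_id)).continuousOn).sub
      (hGc.comp (continuous_const.sub continuous_id)).continuousOn).sub
      (hGc.comp (continuous_const.add continuous_id)).continuousOn).mul hρc)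
  -- key integral estimate
  have hGop : |Gop G L ρ x - Gop G L ρ y| ≤ 2 * K_G * L * |x - y| := by
    have hsub : Gop G L ρ x - Gop G L ρ y
        = ∫ t in (0:ℝ)..L, ((G (x - t) + G (x + t) - G (L - t) - G (L + t)) * ρ t
            - (G (y - t) + G (y + t) - G (L - t) - G (L + t)) * ρ t) := by
      rw [Gop, Gop, ← intervalIntegral.integral_sub (hint x) (hint y)]
    rw [hsub]
    have hb : ∀ t ∈ Set.uIoc (0:ℝ) L,
        ‖(G (x - t) + G (x + t) - G (L - t) - G (L + t)) * ρ t
          - (G (y - t) + G (y + t) - G (L - t) - G (L + t)) * ρ t‖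
        ≤ 2 * K_G * |x - y| := by
      intro t ht
      rw [Set.uIoc_of_le hL.le] at ht
      have htIcc : t ∈ Icc (0:ℝ) L := ⟨ht.1.le, ht.2⟩
      obtain ⟨hρ0, hρ1⟩ := hρb t htIcc
      have heq2 : (G (x - t) + G (x + t) - G (L - t) - G (L + t)) * ρ t
          - (G (y - t) + G (y + t) - G (L - t) - G (L + t)) * ρ t
          = ((G (x - t) - G (y - t)) + (G (x + t) - G (y + t))) * ρ t := by ring
      rw [heq2, Real.norm_eq_abs, abs_mul]
      have h1 : |G (x - t) - G (y - t)| ≤ K_G * |x - y| := by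
        have := hGlip (x - t) (y - t)
        simpa [show x - t - (y - t) = x - y by ring] using this
      have h2 : |G (x + t) - G (y + t)| ≤ K_G * |x - y| := by
        have := hGlip (x + t) (y + t)
        simpa [show x + t - (y + t) = x - y by ring] using this
      have h3 : |(G (x - t) - G (y - t)) + (G (x + t) - G (y + t))|
          ≤ 2 * K_G * |x - y| := by
        calc |(G (x - t) - G (y - t)) + (G (x + t) - G (y + t))|
            ≤ |G (x - t) - G (y - t)| + |G (x + t) - G (y + t)| := abs_add_le _ _
          _ ≤ 2 * K_G * |x - y| := by linarith
      have hρabs : |ρ t| ≤ 1 := by rw [abs_of_nonneg hρ0]; exact hρ1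
      calc |(G (x - t) - G (y - t)) + (G (x + t) - G (y + t))| * |ρ t|
          ≤ (2 * K_G * |x - y|) * 1 :=
            mul_le_mul h3 hρabs (abs_nonneg _) (by positivity)
        _ = 2 * K_G * |x - y| := by ring
    have := intervalIntegral.norm_integral_le_of_norm_le_const hb
    rw [Real.norm_eq_abs] at this
    calc |∫ t in (0:ℝ)..L, _| ≤ 2 * K_G * |x - y| * |L - 0| := this
      _ = 2 * K_G * L * |x - y| := by rw [abs_of_nonneg (by linarith : (0:ℝ) ≤ L - 0)]; ring
  -- difference formula
  have hdiff : (ρ x + δ) ^ p - (ρ y + δ) ^ p = (Gop G L ρ x - Gop G L ρ y) / ν := by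
    have h1 := heq x hx
    have h2 := heq y hy
    field_simp
    linarith
  obtain ⟨hρx0, hρx1⟩ := hρb x hx
  obtain ⟨hρy0, hρy1⟩ := hρb y hy
  -- second inequality
  have hsecond : |(ρ x + δ) ^ p - (ρ y + δ) ^ p| ≤ (2 * K_G * L / ν₀) * |x - y| := by
    rw [hdiff, abs_div, abs_of_pos hν']
    calc |Gop G L ρ x - Gop G L ρ y| / ν ≤ (2 * K_G * L * |x - y|) / ν₀ :=
          div_le_div₀ (by positivity) hGop hν₀ hν
      _ = (2 * K_G * L / ν₀) * |x - y| := by ring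
  -- first inequality
  have hfirst : |ρ x - ρ y| ^ p ≤ |(ρ x + δ) ^ p - (ρ y + δ) ^ p| := by
    rcases le_total (ρ y) (ρ x) with h | h
    · rw [abs_of_nonneg (by linarith : (0:ℝ) ≤ ρ x - ρ y)]
      calc (ρ x - ρ y) ^ p ≤ (ρ x + δ) ^ p - (ρ y + δ) ^ p :=
            aux_rpow_sub p (ρ x) (ρ y) δ hp hρy0 hδ.le h
        _ ≤ |(ρ x + δ) ^ p - (ρ y + δ) ^ p| := le_abs_self _
    · rw [abs_sub_comm (ρ x), abs_sub_comm ((ρ x + δ) ^ p),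
        abs_of_nonneg (by linarith : (0:ℝ) ≤ ρ y - ρ x)]
      calc (ρ y - ρ x) ^ p ≤ (ρ y + δ) ^ p - (ρ x + δ) ^ p :=
            aux_rpow_sub p (ρ y) (ρ x) δ hp hρx0 hδ.le h
        _ ≤ |(ρ y + δ) ^ p - (ρ x + δ) ^ p| := le_abs_self _
  refine ⟨hfirst, hsecond, ?_⟩
  -- third inequality
  have hchain : |ρ x - ρ y| ^ p ≤ (2 * K_G * L / ν₀) * |x - y| := hfirst.trans hsecond
  have := Real.rpow_le_rpow (by positivity) hchain (by positivity : (0:ℝ) ≤ 1 / p)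
  rw [one_div]
  rwa [one_div, Real.rpow_rpow_inv (abs_nonneg _) hp0.ne'] at this
end

section
/- Let L > 0, let G ∈ C¹(ℝ) be even, and let ρ ∈ C¹([0,L]) satisfy ρ(L) = 0. Then the function x ↦ 𝒢_L[ρ](x) is differentiable on [0,L] and for every x ∈ [0,L] one has (d/dx) 𝒢_L[ρ](x) = ℋ_L[ρ'](x), i.e. (d/dx) ∫₀^L [G(x−y) + G(x+y) − G(L−y) − G(L+y)] ρ(y) dy = ∫₀^L [G(x−y) − G(x+y)] ρ'(y) dy. -/
open Set MeasureTheory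

/-!
Since `G` is `C¹` and `ρ` is integrable, `𝒢_L[ρ]` can be differentiated under the integral sign,
giving `∫₀^L [G'(x−y) + G'(x+y)] ρ(y) dy`; the `x`-independent terms `G(L∓y)` drop out.
Integrating `ℋ_L[ρ']` by parts gives the same integral: the boundary terms vanish because the
kernel `G(x−y) − G(x+y)` vanishes at `y = 0` and `ρ(L) = 0`.
-/

open scoped Interval

theorem hasDerivAt_integral_comp_add_mul {K f g : ℝ → ℝ} {a b : ℝ} (hK : ContDiff ℝ 1 K)
    (hg : Continuous g) (hf : IntervalIntegrable f volume a b) (x₀ : ℝ) :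
    HasDerivAt (fun x => ∫ y in a..b, K (x + g y) * f y)
      (∫ y in a..b, deriv K (x₀ + g y) * f y) x₀ := by
  obtain ⟨C, hC⟩ := ((isCompact_closedBall x₀ 1).add
    (isCompact_uIcc.image hg)).exists_bound_of_continuousOn (hK.continuous_deriv le_rfl).continuousOn
  have hint : ∀ (k : ℝ → ℝ) x, Continuous k →
      IntervalIntegrable (fun y => k (x + g y) * f y) volume a b :=
    fun k x hk => hf.continuousOn_mul (hk.comp (continuous_const.add hg)).continuousOn
  refine (intervalIntegral.hasDerivAt_integral_of_dominated_loc_of_deriv_le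
    (F' := fun x y => deriv K (x + g y) * f y) (bound := fun y => C * |f y|)
    (Metric.ball_mem_nhds x₀ one_pos)
    (.of_forall fun x => (hint K x hK.continuous).def'.aestronglyMeasurable)
    (hint K x₀ hK.continuous) (hint _ x₀ (hK.continuous_deriv le_rfl)).def'.aestronglyMeasurable
    (.of_forall fun y hy x hx => ?_) (hf.norm.const_mul C) (.of_forall fun y _ x _ => ?_)).2
  · rw [norm_mul, Real.norm_eq_abs]
    exact mul_le_mul_of_nonneg_right (hC _ (add_mem_add (Metric.ball_subset_closedBall hx)
      (mem_image_of_mem g (uIoc_subset_uIcc hy)))) (abs_nonneg _)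
  · exact ((hK.differentiable one_ne_zero _).hasDerivAt.comp_add_const x (g y)).mul_const (f y)

section

variable {G ρ : ℝ → ℝ} {L : ℝ}

theorem hasDerivAt_Gop (hG : ContDiff ℝ 1 G) (hρ : IntervalIntegrable ρ volume 0 L) (x : ℝ) :
    HasDerivAt (Gop G L ρ) (∫ y in (0:ℝ)..L, (deriv G (x - y) + deriv G (x + y)) * ρ y) x := by
  have hG' : Continuous (deriv G) := hG.continuous_deriv le_rfl
  have hint : ∀ {k : ℝ → ℝ}, Continuous k → IntervalIntegrable (fun y => k y * ρ y) volume 0 L :=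
    fun hk => hρ.continuousOn_mul hk.continuousOn
  have hsplit : Gop G L ρ = fun x => (∫ y in (0:ℝ)..L, G (x + -y) * ρ y)
      + (∫ y in (0:ℝ)..L, G (x + y) * ρ y)
      - ∫ y in (0:ℝ)..L, (G (L - y) + G (L + y)) * ρ y := by
    funext x
    have h₁ := hint (k := fun y => G (x + -y)) (by fun_prop)
    have h₂ := hint (k := fun y => G (x + y)) (by fun_prop)
    have h₃ := hint (k := fun y => G (L - y) + G (L + y)) (by fun_prop)
    rw [Gop, ← intervalIntegral.integral_add h₁ h₂, ← intervalIntegral.integral_sub (h₁.add h₂) h₃]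
    congr 1 with y
    rw [← sub_eq_add_neg]
    ring
  rw [hsplit]
  refine (((hasDerivAt_integral_comp_add_mul hG continuous_neg hρ x).add
    (hasDerivAt_integral_comp_add_mul hG continuous_id hρ x)).sub_const _).congr_deriv ?_
  rw [← intervalIntegral.integral_add (hint (by fun_prop)) (hint (by fun_prop))]
  simp only [add_mul, ← sub_eq_add_neg, id]

theorem Hop_eq_integral_deriv_mul {ρ' : ℝ → ℝ} (hG : ContDiff ℝ 1 G)
    (hρ : ∀ y ∈ [[0, L]], HasDerivWithinAt ρ (ρ' y) [[0, L]] y)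
    (hρ' : IntervalIntegrable ρ' volume 0 L) (hρL : ρ L = 0) (x : ℝ) :
    Hop G L ρ' x = ∫ y in (0:ℝ)..L, (deriv G (x - y) + deriv G (x + y)) * ρ y := by
  have hGd : ∀ z, HasDerivAt G (deriv G z) z :=
    fun z => (hG.differentiable one_ne_zero z).hasDerivAt
  have hu : ∀ y ∈ [[0, L]], HasDerivWithinAt (fun y => G (x - y) - G (x + y))
      (-deriv G (x - y) - deriv G (x + y)) [[0, L]] y := fun y _ =>
    (((hGd _).comp_const_sub x y).sub ((hGd _).comp_const_add x y)).hasDerivWithinAt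
  have hu' : IntervalIntegrable (fun y => -deriv G (x - y) - deriv G (x + y)) volume 0 L := by
    have hG' : Continuous (deriv G) := hG.continuous_deriv le_rfl
    exact Continuous.intervalIntegrable (by fun_prop) _ _
  rw [Hop, intervalIntegral.integral_mul_deriv_eq_deriv_mul_of_hasDerivWithinAt hu hρ hu' hρ',
    hρL]
  simp only [mul_zero, sub_zero, add_zero, sub_self, zero_mul, zero_sub,
    ← intervalIntegral.integral_neg]
  congr 1 with y
  ring

end

theorem deriv_Gop_eq_Hop_general
    (L : ℝ)
    (G : ℝ → ℝ) (hG : ContDiff ℝ 1 G)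
    (ρ ρ' : ℝ → ℝ)
    (hρ : ∀ x ∈ Icc (0:ℝ) L, HasDerivWithinAt ρ (ρ' x) (Icc 0 L) x)
    (hρ'c : ContinuousOn ρ' (Icc 0 L))
    (hρL : ρ L = 0) :
    ∀ x ∈ Icc (0:ℝ) L,
      HasDerivWithinAt (fun t => Gop G L ρ t) (Hop G L ρ' x) (Icc 0 L) x := by
  intro x hx
  rw [← uIcc_of_le (hx.1.trans hx.2)] at hρ hρ'c
  have hρc : ContinuousOn ρ [[0, L]] := fun y hy => (hρ y hy).continuousWithinAt
  rw [Hop_eq_integral_deriv_mul hG hρ hρ'c.intervalIntegrable hρL]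
  exact (hasDerivAt_Gop hG hρc.intervalIntegrable x).hasDerivWithinAt

/-- Differentiating the stationary-state integral operator: for `G ∈ C¹(ℝ)` even and
`ρ ∈ C¹([0,L])` with `ρ(L) = 0`, the function `x ↦ 𝒢_L[ρ](x)` is differentiable on
`[0,L]` with derivative `ℋ_L[ρ'](x)`. -/
theorem deriv_Gop_eq_Hop
    (L : ℝ) (hL : 0 < L)
    (G : ℝ → ℝ) (hG : ContDiff ℝ 1 G) (hGeven : ∀ x, G (-x) = G x)
    (ρ ρ' : ℝ → ℝ)
    (hρ : ∀ x ∈ Icc (0:ℝ) L, HasDerivWithinAt ρ (ρ' x) (Icc 0 L) x)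
    (hρ'c : ContinuousOn ρ' (Icc 0 L))
    (hρL : ρ L = 0) :
    ∀ x ∈ Icc (0:ℝ) L,
      HasDerivWithinAt (fun t => Gop G L ρ t) (Hop G L ρ' x) (Icc 0 L) x :=
  deriv_Gop_eq_Hop_general L G hG ρ ρ' hρ hρ'c hρL
end

section
/- Let m > 1, L > 0, ν > 0, and suppose G is Lipschitz continuous on ℝ with Lipschitz constant K_G. If ρ ∈ C([0,L]) satisfies 0 ≤ ρ ≤ 1 and ν ρ(x)^{m−1} = 𝒢_L[ρ](x) for all x ∈ [0,L], then there is a constant C depending only on K_G, L and ν (one may take C = (2 K_G L / ν)^{1/(m−1)}) such that ρ(x) ≤ C (L − x)^{1/(m−1)} for all x ∈ [0,L]. -/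
open Set MeasureTheory

/-- Boundary behaviour of stationary states at the edge of their support: if `G` is
Lipschitz with constant `K_G` and `ν ρ^{m−1} = 𝒢_L[ρ]` on `[0,L]`, then
`ρ(x) ≤ C (L−x)^{1/(m−1)}` with `C = (2 K_G L / ν)^{1/(m−1)}`. -/
theorem boundary_estimate
    (G : ℝ → ℝ) (K_G : ℝ) (hKG : 0 ≤ K_G)
    (hGnn : ∀ x, 0 ≤ G x) (hGeven : ∀ x, G (-x) = G x)
    (hGbdd : ∃ M : ℝ, ∀ x, |G x| ≤ M)
    (hGlip : ∀ a b : ℝ, |G a - G b| ≤ K_G * |a - b|)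
    (m L ν : ℝ) (hm : 1 < m) (hL : 0 < L) (hν : 0 < ν)
    (ρ : ℝ → ℝ) (hρc : ContinuousOn ρ (Icc 0 L))
    (hρ01 : ∀ x ∈ Icc (0:ℝ) L, 0 ≤ ρ x ∧ ρ x ≤ 1)
    (heq : ∀ x ∈ Icc (0:ℝ) L, ν * ρ x ^ (m - 1) = Gop G L ρ x) :
    ∀ x ∈ Icc (0:ℝ) L,
      ρ x ≤ (2 * K_G * L / ν) ^ (1 / (m - 1)) * (L - x) ^ (1 / (m - 1)) := by
  intro x hx
  obtain ⟨hx0, hxL⟩ := hx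
  obtain ⟨hρ0, hρ1⟩ := hρ01 x ⟨hx0, hxL⟩
  have hm1 : (0:ℝ) < m - 1 := by linarith
  have hGbound : ‖Gop G L ρ x‖ ≤ 2 * K_G * (L - x) * |L - 0| := by
    apply intervalIntegral.norm_integral_le_of_norm_le_const
    intro y hy
    rw [Set.uIoc_of_le hL.le] at hy
    obtain ⟨hρy0, hρy1⟩ := hρ01 y ⟨hy.1.le, hy.2⟩
    have h1 : |G (x - y) - G (L - y)| ≤ K_G * (L - x) := by
      calc |G (x - y) - G (L - y)| ≤ K_G * |x - y - (L - y)| := hGlip _ _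
        _ = K_G * (L - x) := by
            rw [show x - y - (L - y) = -(L - x) by ring, abs_neg,
              abs_of_nonneg (by linarith)]
    have h2 : |G (x + y) - G (L + y)| ≤ K_G * (L - x) := by
      calc |G (x + y) - G (L + y)| ≤ K_G * |x + y - (L + y)| := hGlip _ _
        _ = K_G * (L - x) := by
            rw [show x + y - (L + y) = -(L - x) by ring, abs_neg,
              abs_of_nonneg (by linarith)]
    have habs : |G (x - y) + G (x + y) - G (L - y) - G (L + y)| ≤ 2 * K_G * (L - x) := by
      have hrw : G (x - y) + G (x + y) - G (L - y) - G (L + y)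
          = (G (x - y) - G (L - y)) + (G (x + y) - G (L + y)) := by ring
      rw [hrw]
      calc |(G (x - y) - G (L - y)) + (G (x + y) - G (L + y))|
          ≤ |G (x - y) - G (L - y)| + |G (x + y) - G (L + y)| := abs_add_le _ _
        _ ≤ K_G * (L - x) + K_G * (L - x) := add_le_add h1 h2
        _ = 2 * K_G * (L - x) := by ring
    have hnn : (0:ℝ) ≤ 2 * K_G * (L - x) := by
      have : (0:ℝ) ≤ L - x := by linarith
      positivity
    calc ‖(G (x - y) + G (x + y) - G (L - y) - G (L + y)) * ρ y‖
        = |G (x - y) + G (x + y) - G (L - y) - G (L + y)| * |ρ y| := by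
          rw [Real.norm_eq_abs, abs_mul]
      _ ≤ (2 * K_G * (L - x)) * 1 :=
          mul_le_mul habs (by rw [abs_of_nonneg hρy0]; exact hρy1)
            (abs_nonneg _) hnn
      _ = 2 * K_G * (L - x) := by ring
  have hkey : ρ x ^ (m - 1) ≤ 2 * K_G * L / ν * (L - x) := by
    have heqx := heq x ⟨hx0, hxL⟩
    have hb : ν * ρ x ^ (m - 1) ≤ 2 * K_G * (L - x) * L := by
      rw [heqx]
      calc Gop G L ρ x ≤ ‖Gop G L ρ x‖ := le_abs_self _
        _ ≤ 2 * K_G * (L - x) * |L - 0| := hGbound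
        _ = 2 * K_G * (L - x) * L := by rw [sub_zero, abs_of_pos hL]
    rw [div_mul_eq_mul_div, le_div_iff₀ hν]
    nlinarith
  have hLx : (0:ℝ) ≤ L - x := by linarith
  have hBnn : (0:ℝ) ≤ 2 * K_G * L / ν := by positivity
  have hpow : (ρ x ^ (m - 1)) ^ (1 / (m - 1)) ≤
      (2 * K_G * L / ν * (L - x)) ^ (1 / (m - 1)) :=
    Real.rpow_le_rpow (Real.rpow_nonneg hρ0 _) hkey (by positivity)
  have hleft : (ρ x ^ (m - 1)) ^ (1 / (m - 1)) = ρ x := by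
    rw [← Real.rpow_mul hρ0, mul_one_div_cancel (ne_of_gt hm1), Real.rpow_one]
  rw [← Real.mul_rpow hBnn hLx, ← hleft]
  exact hpow
end

section
/- Let m > 1, L > 0, ν > 0, and let G ∈ C¹(ℝ) be even with G'(y) < 0 for all y > 0. Let ρ ∈ C²([0,L]) satisfy ρ(0) = 1, ρ'(0) = 0, ρ'(x) ≤ 0 on [0,L], with ρ' not identically zero, and suppose ν (m−1) ρ(x)^{m−2} ρ'(x) = ℋ_L[ρ'](x) for all x ∈ [0,L]. Then ν (m−1) ρ''(0) = ∫₀^L [G'(−y) − G'(y)] ρ'(y) dy, and consequently ρ''(0) < 0, i.e. ρ is locally concave at x = 0. -/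
/-!
Differentiate the stationary-state equation at `x = 0`. Because `ρ(0) = 1` and `ρ'(0) = 0`, the
left side has derivative `ν (m−1) ρ''(0)` there, while differentiating `ℋ_L[ρ']` under the integral
sign gives `∫₀^L [G'(−y) − G'(y)] ρ'(y) dy`; on the closed interval the one-sided derivative is
unique, so the two agree. Since `G` is even, `G'` is odd and the integrand is `−2 G'(y) ρ'(y) ≤ 0`,
strictly negative where `ρ' ≠ 0`, so `ρ''(0) < 0`.
-/

open Set MeasureTheory

lemma deriv_neg_of_even {G : ℝ → ℝ} (hG : ∀ x, G (-x) = G x) (x : ℝ) :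
    deriv G (-x) = -deriv G x := by
  have h := deriv_comp_neg G x
  rw [show (fun y => G (-y)) = G from funext hG] at h
  linarith

lemma hasDerivAt_Hop {G : ℝ → ℝ} (hG : ContDiff ℝ 1 G) {L : ℝ} {u : ℝ → ℝ}
    (hu : ContinuousOn u (uIcc 0 L)) (x₀ : ℝ) :
    HasDerivAt (Hop G L u) (∫ y in (0:ℝ)..L, (deriv G (x₀ - y) - deriv G (x₀ + y)) * u y) x₀ := by
  have hGc : Continuous G := hG.continuous
  have hG'c : Continuous (deriv G) := hG.continuous_deriv le_rfl
  have hGd : Differentiable ℝ G := hG.differentiable one_ne_zero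
  have hint : ∀ g : ℝ → ℝ, Continuous g → IntervalIntegrable (fun y => g y * u y) volume 0 L :=
    fun g hg => (hg.continuousOn.mul hu).intervalIntegrable
  set R := |x₀| + 1 + |L|
  obtain ⟨M, hM⟩ := (isCompact_Icc (a := -R) (b := R)).exists_bound_of_continuousOn
    hG'c.continuousOn
  have hbound : ∀ t ∈ uIoc (0:ℝ) L, ∀ x ∈ Metric.ball x₀ 1,
      ‖(deriv G (x - t) - deriv G (x + t)) * u t‖ ≤ (M + M) * ‖u t‖ := by
    intro t ht x hx
    have ht' : |t| ≤ |L| := by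
      simpa using abs_sub_left_of_mem_uIcc (uIoc_subset_uIcc ht)
    have hx' : |x| ≤ |x₀| + 1 := by
      have := abs_sub_abs_le_abs_sub x x₀
      rw [Metric.mem_ball, Real.dist_eq] at hx
      linarith
    have hmem : ∀ z, |z| ≤ R → ‖deriv G z‖ ≤ M := fun z hz => hM z (abs_le.mp hz)
    rw [norm_mul]
    gcongr
    calc ‖deriv G (x - t) - deriv G (x + t)‖
        ≤ ‖deriv G (x - t)‖ + ‖deriv G (x + t)‖ := norm_sub_le _ _
      _ ≤ M + M := add_le_add (hmem _ (by linarith [abs_sub x t]))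
          (hmem _ (by linarith [abs_add_le x t]))
  refine (intervalIntegral.hasDerivAt_integral_of_dominated_loc_of_deriv_le
    (F := fun x y => (G (x - y) - G (x + y)) * u y)
    (Metric.ball_mem_nhds x₀ one_pos)
    (Filter.Eventually.of_forall fun x => (hint _ (by fun_prop)).def'.aestronglyMeasurable)
    (hint _ (by fun_prop))
    (hint _ (by fun_prop)).def'.aestronglyMeasurable
    (Filter.Eventually.of_forall hbound)
    (hu.norm.intervalIntegrable.const_mul (M + M))
    (Filter.Eventually.of_forall fun t _ x _ => ?_)).2
  exact (((hGd _).hasDerivAt.comp_sub_const x t).sub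
    ((hGd _).hasDerivAt.comp_add_const x t)).mul_const (u t)

lemma integral_sub_deriv_mul_neg_of_even {G : ℝ → ℝ} (hG'c : Continuous (deriv G))
    (hGeven : ∀ x, G (-x) = G x) (hG' : ∀ y : ℝ, 0 < y → deriv G y < 0) {L : ℝ} (hL : 0 < L)
    {v : ℝ → ℝ} (hv : ContinuousOn v (Icc 0 L)) (hv_nonpos : ∀ y ∈ Ioc 0 L, v y ≤ 0)
    (hv_neg : ∃ c ∈ Ioc 0 L, v c < 0) :
    ∫ y in (0:ℝ)..L, (deriv G (-y) - deriv G y) * v y < 0 := by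
  have hfactor_pos : ∀ y : ℝ, 0 < y → 0 < deriv G (-y) - deriv G y := fun y hy => by
    linarith [deriv_neg_of_even hGeven y, hG' y hy]
  obtain ⟨c, hc, hvc⟩ := hv_neg
  simpa using intervalIntegral.integral_lt_integral_of_continuousOn_of_le_of_exists_lt hL
    (((hG'c.comp continuous_neg).sub hG'c).continuousOn.mul hv) continuousOn_const
    (fun y hy => mul_nonpos_of_nonneg_of_nonpos (hfactor_pos y hy.1).le (hv_nonpos y hy))
    ⟨c, Ioc_subset_Icc_self hc, mul_neg_of_pos_of_neg (hfactor_pos c hc.1) hvc⟩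

theorem locally_concave_at_origin_general
    (m L ν : ℝ) (hm : 1 < m) (hL : 0 < L) (hν : 0 < ν)
    (G : ℝ → ℝ) (hG : ContDiff ℝ 1 G) (hGeven : ∀ x, G (-x) = G x)
    (hG' : ∀ y : ℝ, 0 < y → deriv G y < 0)
    (ρ ρ' ρ'' : ℝ → ℝ)
    (hρ : ∀ x ∈ Icc (0:ℝ) L, HasDerivWithinAt ρ (ρ' x) (Icc 0 L) x)
    (hρ' : ∀ x ∈ Icc (0:ℝ) L, HasDerivWithinAt ρ' (ρ'' x) (Icc 0 L) x)
    (hρ0 : ρ 0 = 1) (hρ'0 : ρ' 0 = 0)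
    (hρ'np : ∀ x ∈ Icc (0:ℝ) L, ρ' x ≤ 0)
    (hρ'ne : ∃ x ∈ Icc (0:ℝ) L, ρ' x ≠ 0)
    (heq : ∀ x ∈ Icc (0:ℝ) L,
      ν * (m - 1) * ρ x ^ (m - 2) * ρ' x = Hop G L ρ' x) :
    ν * (m - 1) * ρ'' 0 = (∫ y in (0:ℝ)..L, (deriv G (-y) - deriv G y) * ρ' y) ∧
    ρ'' 0 < 0 := by
  have h0 : (0:ℝ) ∈ Icc 0 L := ⟨le_rfl, hL.le⟩
  have hρ'_cont : ContinuousOn ρ' (Icc 0 L) := fun x hx => (hρ' x hx).continuousWithinAt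
  have hlhs : HasDerivWithinAt (fun x => ν * (m - 1) * ρ x ^ (m - 2) * ρ' x)
      (ν * (m - 1) * ρ'' 0) (Icc 0 L) 0 :=
    ((((hρ 0 h0).rpow_const (Or.inl (by simp [hρ0]))).const_mul (ν * (m - 1))).mul
      (hρ' 0 h0)).congr_deriv (by simp [hρ0, hρ'0])
  have hrhs : HasDerivAt (Hop G L ρ')
      (∫ y in (0:ℝ)..L, (deriv G (-y) - deriv G y) * ρ' y) 0 := by
    simpa using hasDerivAt_Hop hG (by rwa [uIcc_of_le hL.le]) 0
  have hformula := (uniqueDiffOn_Icc hL 0 h0).eq_deriv _ hlhs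
    (hrhs.hasDerivWithinAt.congr heq (heq 0 h0))
  obtain ⟨c, hc, hρ'_c⟩ := hρ'ne
  have hc_pos : 0 < c := hc.1.lt_of_ne (by rintro rfl; exact hρ'_c hρ'0)
  have hintegral := integral_sub_deriv_mul_neg_of_even
    (hG.continuous_deriv le_rfl) hGeven hG' hL hρ'_cont
    (fun y hy => hρ'np y (Ioc_subset_Icc_self hy))
    ⟨c, ⟨hc_pos, hc.2⟩, (hρ'np c hc).lt_of_ne hρ'_c⟩
  exact ⟨hformula, neg_of_mul_neg_right (hformula ▸ hintegral) (mul_pos hν (sub_pos.2 hm)).le⟩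

/-- Local concavity of stationary states at the origin: if `ρ ∈ C²([0,L])` with
`ρ(0) = 1`, `ρ'(0) = 0`, `ρ' ≤ 0` not identically zero, solves the differentiated
stationary-state equation `ν (m−1) ρ^{m−2} ρ' = ℋ_L[ρ']`, and `G ∈ C¹(ℝ)` is even
with `G' < 0` on `(0,∞)`, then
`ν (m−1) ρ''(0) = ∫₀^L [G'(−y) − G'(y)] ρ'(y) dy` and `ρ''(0) < 0`. -/
theorem locally_concave_at_origin
    (m L ν : ℝ) (hm : 1 < m) (hL : 0 < L) (hν : 0 < ν)
    (G : ℝ → ℝ) (hG : ContDiff ℝ 1 G) (hGeven : ∀ x, G (-x) = G x)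
    (hG' : ∀ y : ℝ, 0 < y → deriv G y < 0)
    (ρ ρ' ρ'' : ℝ → ℝ)
    (hρ : ∀ x ∈ Icc (0:ℝ) L, HasDerivWithinAt ρ (ρ' x) (Icc 0 L) x)
    (hρ' : ∀ x ∈ Icc (0:ℝ) L, HasDerivWithinAt ρ' (ρ'' x) (Icc 0 L) x)
    (hρ''c : ContinuousOn ρ'' (Icc 0 L))
    (hρ0 : ρ 0 = 1) (hρ'0 : ρ' 0 = 0)
    (hρ'np : ∀ x ∈ Icc (0:ℝ) L, ρ' x ≤ 0)
    (hρ'ne : ∃ x ∈ Icc (0:ℝ) L, ρ' x ≠ 0)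
    (heq : ∀ x ∈ Icc (0:ℝ) L,
      ν * (m - 1) * ρ x ^ (m - 2) * ρ' x = Hop G L ρ' x) :
    ν * (m - 1) * ρ'' 0 = (∫ y in (0:ℝ)..L, (deriv G (-y) - deriv G y) * ρ' y) ∧
    ρ'' 0 < 0 :=
  locally_concave_at_origin_general m L ν hm hL hν G hG hGeven hG' ρ ρ' ρ'' hρ hρ' hρ0 hρ'0 hρ'np
    hρ'ne heq
end

section
/- Let m > 2, L > 0, ν > 0, and let G ∈ C¹(ℝ) be even with G'(y) < 0 for all y > 0 and with G' nonincreasing on (−2L, 2L) (i.e. G concave on (−2L,2L)). Let ρ ∈ C¹([0,L]) ∩ C²((0,L)) be positive on [0,L) with ρ'(x) < 0 for all x ∈ (0,L), and suppose ν (m−1) ρ(x)^{m−2} ρ'(x) = ℋ_L[ρ'](x) for all x ∈ [0,L]. Then ρ''(x) < 0 for all x ∈ (0,L), i.e. ρ is strictly concave on the interior of its support. -/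
open Set MeasureTheory

/-! Differentiating the stationary-state equation `ν (m−1) ρ^{m−2} ρ' = ℋ_L[ρ']` once more gives
`ν (m−1) [(m−2) ρ^{m−3} (ρ')² + ρ^{m−2} ρ''] = ℋ_L[ρ']` with kernel `G'` in place of `G`.
Since `G'` is nonincreasing, `G'(x−y) − G'(x+y) ≥ 0` for `y > 0`, while `ρ' < 0`, so the right-hand
side is `≤ 0`. For `m > 2` the first term on the left is strictly positive, forcing `ρ'' < 0`. -/

theorem intervalIntegral.hasDerivAt_integral_mul_of_continuous_deriv
    {F F' : ℝ → ℝ → ℝ} {u : ℝ → ℝ} {a b : ℝ}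
    (hF : ∀ x, Continuous (F x)) (hF' : Continuous (Function.uncurry F'))
    (hFF' : ∀ x y, HasDerivAt (F · y) (F' x y) x) (hu : ContinuousOn u (uIcc a b)) (x₀ : ℝ) :
    HasDerivAt (fun x => ∫ y in a..b, F x y * u y) (∫ y in a..b, F' x₀ y * u y) x₀ := by
  obtain ⟨C, hC⟩ := ((isCompact_closedBall x₀ 1).prod (isCompact_uIcc (a := a) (b := b)))
    |>.exists_bound_of_continuousOn hF'.continuousOn
  obtain ⟨M, hM⟩ := isCompact_uIcc.exists_bound_of_continuousOn hu
  have hC₀ : 0 ≤ C :=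
    (norm_nonneg _).trans (hC (x₀, a) ⟨Metric.mem_closedBall_self zero_le_one, left_mem_uIcc⟩)
  have hmeas : ∀ f : ℝ → ℝ, Continuous f →
      AEStronglyMeasurable (fun y => f y * u y) (volume.restrict (uIoc a b)) := fun f hf =>
    ((hf.continuousOn.mul hu).mono uIoc_subset_uIcc).aestronglyMeasurable measurableSet_uIoc
  refine (intervalIntegral.hasDerivAt_integral_of_dominated_loc_of_deriv_le
    (bound := fun _ => C * M) (Metric.ball_mem_nhds x₀ one_pos)
    (.of_forall fun x => hmeas _ (hF x)) ((hF x₀).continuousOn.mul hu).intervalIntegrable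
    (hmeas _ (hF'.uncurry_left x₀)) ?_ intervalIntegrable_const
    (ae_of_all _ fun y _ x _ => (hFF' x y).mul_const (u y))).2
  refine ae_of_all _ fun y hy x hx => ?_
  rw [norm_mul]
  exact mul_le_mul (hC (x, y) ⟨Metric.ball_subset_closedBall hx, uIoc_subset_uIcc hy⟩)
    (hM y (uIoc_subset_uIcc hy)) (norm_nonneg _) hC₀

theorem hasDerivAt_hop {G u : ℝ → ℝ} {L : ℝ} (hG : ContDiff ℝ 1 G)
    (hu : ContinuousOn u (uIcc 0 L)) (x : ℝ) :
    HasDerivAt (Hop G L u) (Hop (deriv G) L u x) x := by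
  have hG' : Continuous (deriv G) := hG.continuous_deriv le_rfl
  have hGd : Differentiable ℝ G := hG.differentiable one_ne_zero
  refine intervalIntegral.hasDerivAt_integral_mul_of_continuous_deriv
    (F := fun x y => G (x - y) - G (x + y)) (F' := fun x y => deriv G (x - y) - deriv G (x + y))
    (fun _ => by fun_prop) (show Continuous fun p : ℝ × ℝ => _ by fun_prop)
    (fun x y => ?_) hu x
  exact ((hGd _).hasDerivAt.comp_sub_const x y).sub ((hGd _).hasDerivAt.comp_add_const x y)

theorem hop_nonpos_of_antitoneOn {g u : ℝ → ℝ} {L x : ℝ}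
    (hg : AntitoneOn g (Ioo (-(2 * L)) (2 * L))) (hu : ∀ y ∈ Ioo 0 L, u y ≤ 0)
    (hx : x ∈ Icc 0 L) : Hop g L u x ≤ 0 := by
  obtain ⟨hx₀, hxL⟩ := hx
  rw [Hop, intervalIntegral.integral_of_le (hx₀.trans hxL), integral_Ioc_eq_integral_Ioo]
  refine setIntegral_nonpos measurableSet_Ioo fun y ⟨hy₀, hyL⟩ => ?_
  have hgy : g (x + y) ≤ g (x - y) :=
    hg ⟨by linarith, by linarith⟩ ⟨by linarith, by linarith⟩ (by linarith)
  exact mul_nonpos_of_nonneg_of_nonpos (sub_nonneg.2 hgy) (hu y ⟨hy₀, hyL⟩)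

theorem strictly_concave_on_support_general
    (m L ν : ℝ) (hm : 2 < m) (hL : 0 < L) (hν : 0 < ν)
    (G : ℝ → ℝ) (hG : ContDiff ℝ 1 G)
    (hG'mono : AntitoneOn (deriv G) (Ioo (-(2*L)) (2*L)))
    (ρ ρ' ρ'' : ℝ → ℝ)
    (hρ : ∀ x ∈ Icc (0:ℝ) L, HasDerivWithinAt ρ (ρ' x) (Icc 0 L) x)
    (hρ'c : ContinuousOn ρ' (Icc 0 L))
    (hρ' : ∀ x ∈ Ioo (0:ℝ) L, HasDerivAt ρ' (ρ'' x) x)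
    (hρpos : ∀ x ∈ Ico (0:ℝ) L, 0 < ρ x)
    (hρ'neg : ∀ x ∈ Ioo (0:ℝ) L, ρ' x < 0)
    (heq : ∀ x ∈ Icc (0:ℝ) L,
      ν * (m - 1) * ρ x ^ (m - 2) * ρ' x = Hop G L ρ' x) :
    ∀ x ∈ Ioo (0:ℝ) L, ρ'' x < 0 := by
  intro x hx
  have hxI : x ∈ Icc 0 L := Ioo_subset_Icc_self hx
  have hρx : 0 < ρ x := hρpos x ⟨hx.1.le, hx.2⟩
  have hLHS := ((((hρ x hxI).hasDerivAt (Icc_mem_nhds hx.1 hx.2)).rpow_const (p := m - 2)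
    (Or.inl hρx.ne')).mul (hρ' x hx)).const_mul (ν * (m - 1))
  have hRHS : HasDerivAt (fun y => ν * (m - 1) * (ρ y ^ (m - 2) * ρ' y))
      (Hop (deriv G) L ρ' x) x := by
    refine (hasDerivAt_hop hG (uIcc_of_le hL.le ▸ hρ'c) x).congr_of_eventuallyEq ?_
    filter_upwards [Ioo_mem_nhds hx.1 hx.2] with y hy
    rw [← heq y (Ioo_subset_Icc_self hy)]
    ring
  have hbracket : ρ' x * (m - 2) * ρ x ^ (m - 2 - 1) * ρ' x + ρ x ^ (m - 2) * ρ'' x ≤ 0 :=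
    nonpos_of_mul_nonpos_right ((hLHS.unique hRHS).trans_le
      (hop_nonpos_of_antitoneOn hG'mono (fun y hy => (hρ'neg y hy).le) hxI))
      (mul_pos hν (by linarith))
  have hfirst : 0 < ρ' x * (m - 2) * ρ x ^ (m - 2 - 1) * ρ' x :=
    calc 0 < ρ' x * ρ' x * ((m - 2) * ρ x ^ (m - 2 - 1)) :=
          mul_pos (mul_self_pos.2 (hρ'neg x hx).ne)
            (mul_pos (sub_pos.2 hm) (Real.rpow_pos_of_pos hρx _))
      _ = ρ' x * (m - 2) * ρ x ^ (m - 2 - 1) * ρ' x := by ring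
  exact neg_of_mul_neg_right (by linarith) (Real.rpow_pos_of_pos hρx _).le

/-- Strict concavity of stationary states for `m > 2` when the kernel `G` is concave
on `(−2L, 2L)`: if `ρ ∈ C¹([0,L]) ∩ C²((0,L))` is positive on `[0,L)` with `ρ' < 0`
on `(0,L)` and solves the differentiated stationary-state equation
`ν (m−1) ρ^{m−2} ρ' = ℋ_L[ρ']`, then `ρ'' < 0` on `(0,L)`. -/
theorem strictly_concave_on_support
    (m L ν : ℝ) (hm : 2 < m) (hL : 0 < L) (hν : 0 < ν)
    (G : ℝ → ℝ) (hG : ContDiff ℝ 1 G) (hGeven : ∀ x, G (-x) = G x)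
    (hG'neg : ∀ y : ℝ, 0 < y → deriv G y < 0)
    (hG'mono : AntitoneOn (deriv G) (Ioo (-(2*L)) (2*L)))
    (ρ ρ' ρ'' : ℝ → ℝ)
    (hρ : ∀ x ∈ Icc (0:ℝ) L, HasDerivWithinAt ρ (ρ' x) (Icc 0 L) x)
    (hρ'c : ContinuousOn ρ' (Icc 0 L))
    (hρ' : ∀ x ∈ Ioo (0:ℝ) L, HasDerivAt ρ' (ρ'' x) x)
    (hρpos : ∀ x ∈ Ico (0:ℝ) L, 0 < ρ x)
    (hρ'neg : ∀ x ∈ Ioo (0:ℝ) L, ρ' x < 0)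
    (heq : ∀ x ∈ Icc (0:ℝ) L,
      ν * (m - 1) * ρ x ^ (m - 2) * ρ' x = Hop G L ρ' x) :
    ∀ x ∈ Ioo (0:ℝ) L, ρ'' x < 0 :=
  strictly_concave_on_support_general m L ν hm hL hν G hG hG'mono ρ ρ' ρ'' hρ hρ'c hρ' hρpos hρ'neg
    heq
end
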